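/- If (x, X, y, Y₁₂, α) ∈ ℝ² × Sym₂(ℝ) × ℝ² × ℝ × ℝ² satisfies the linear conditions (L), then it satisfies the PSD condition (P3). -/

import Mathlib

open Matrix

set_option linter.unusedVariables false

/-- Linear conditions (L). -/
def Lcond (x1 x2 X11 X12 X22 y1 y2 Y12 a1 a2 : ℝ) : Prop :=
  X11 ≤ x1 ∧ x1 ≤ y1 ∧ X22 ≤ x2 ∧ x2 ≤ y2 ∧
  max 0 (x1 - a1 + x2 - a2 - Y12) ≤ X12 ∧ X12 ≤ min (x1 - a1) (x2 - a2) ∧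
  0 ≤ a1 ∧ a1 ≤ y1 - Y12 ∧ 0 ≤ a2 ∧ a2 ≤ y2 - Y12 ∧
  max 0 (y1 + y2 - 1) ≤ Y12 ∧ Y12 ≤ min y1 y2

/-- PSD condition (P3). -/
def P3cond (x1 x2 X11 X12 X22 y1 y2 Y12 a1 a2 : ℝ) : Prop :=
  (!![Y12, x1 - a1, x2 - a2;
      x1 - a1, x1 - a1, X12;
      x2 - a2, X12, x2 - a2] : Matrix (Fin 3) (Fin 3) ℝ).PosSemidef

/-- PSD condition (P4a). -/
def P4acond (x1 x2 X11 X12 X22 y1 y2 Y12 a1 a2 : ℝ) : Prop :=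
  (!![y1 - Y12, 0, a1, 0;
      0, Y12, x1 - a1, x2 - a2;
      a1, x1 - a1, X11, X12;
      0, x2 - a2, X12, x2 - a2] : Matrix (Fin 4) (Fin 4) ℝ).PosSemidef

/-- PSD condition (P4b). -/
def P4bcond (x1 x2 X11 X12 X22 y1 y2 Y12 a1 a2 : ℝ) : Prop :=
  (!![y2 - Y12, 0, 0, a2;
      0, Y12, x1 - a1, x2 - a2;
      0, x1 - a1, x1 - a1, X12;
      a2, x2 - a2, X12, X22] : Matrix (Fin 4) (Fin 4) ℝ).PosSemidef

/-- PSD condition (P5). -/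
def P5cond (x1 x2 X11 X12 X22 y1 y2 Y12 a1 a2 : ℝ) : Prop :=
  (!![y1 - Y12, 0, 0, a1, 0;
      0, y2 - Y12, 0, 0, a2;
      0, 0, Y12, x1 - a1, x2 - a2;
      a1, 0, x1 - a1, X11, X12;
      0, a2, x2 - a2, X12, X22] : Matrix (Fin 5) (Fin 5) ℝ).PosSemidef

/-!
Writing `u₁ = x₁ - α₁`, `u₂ = x₂ - α₂`, the (P3) matrix is
`X₁₂ · 𝟙𝟙ᵀ + (u₁ - X₁₂) · (1,1,0)(1,1,0)ᵀ + (u₂ - X₁₂) · (1,0,1)(1,0,1)ᵀ + (Y₁₂ - u₁ - u₂ + X₁₂) · e₀e₀ᵀ`,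
and the bounds on `X₁₂` in (L) say exactly that these four coefficients are nonnegative.
-/

lemma Matrix.posSemidef_smul_vecMulVec_self {n : Type*} [Fintype n] {c : ℝ} (hc : 0 ≤ c)
    (w : n → ℝ) : (c • vecMulVec w w).PosSemidef := by
  simpa using (posSemidef_vecMulVec_self_star w).smul hc

lemma Matrix.posSemidef_fin_three_of_le {c p q r : ℝ} (hr : 0 ≤ r) (hrp : r ≤ p)
    (hrq : r ≤ q) (hc : p + q - r ≤ c) :
    (!![c, p, q; p, p, r; q, r, q] : Matrix (Fin 3) (Fin 3) ℝ).PosSemidef := by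
  have hsum : (!![c, p, q; p, p, r; q, r, q] : Matrix (Fin 3) (Fin 3) ℝ) =
      r • vecMulVec ![1, 1, 1] ![1, 1, 1] + (p - r) • vecMulVec ![1, 1, 0] ![1, 1, 0] +
        (q - r) • vecMulVec ![1, 0, 1] ![1, 0, 1] +
        (c - p - q + r) • vecMulVec ![1, 0, 0] ![1, 0, 0] := by
    ext i j
    fin_cases i <;> fin_cases j <;> simp
    ring
  rw [hsum]
  refine (((posSemidef_smul_vecMulVec_self hr _).add ?_).add ?_).add ?_ <;>
    exact posSemidef_smul_vecMulVec_self (by linarith) _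

theorem stmt5 (x1 x2 X11 X12 X22 y1 y2 Y12 a1 a2 : ℝ)
    (hL : Lcond x1 x2 X11 X12 X22 y1 y2 Y12 a1 a2) :
    P3cond x1 x2 X11 X12 X22 y1 y2 Y12 a1 a2 := by
  obtain ⟨-, -, -, -, hlow, hup, -, -, -, -, -, -⟩ := hL
  obtain ⟨hX12_nonneg, hX12_low⟩ := max_le_iff.mp hlow
  obtain ⟨hX12_le₁, hX12_le₂⟩ := le_min_iff.mp hup
  exact posSemidef_fin_three_of_le hX12_nonneg hX12_le₁ hX12_le₂ (by linarith)
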